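/- arXiv:2410.06164 — 4 statements merged into one kernel-verified Lean document; each statement's English description precedes it below -/
import Mathlib

section
/- Let M be a compact metric space, f : M × M → ℝ a continuous function, and (Ω, P) a probability space. Let (X_k)_{k≥1} be an i.i.d. sequence of M-valued random variables, and let (p_N) be a sequence of measurable maps Ω → M converging almost surely to a point p ∈ M. Then (1/N) Σ_{k=1}^N f(p_N, X_k) → E[f(p, X_1)] almost surely as N → ∞. -/
/-!
Since `f` is uniformly continuous on the compact space `M × M`, `f (p_N, ·) → f (p, ·)` uniformly
whenever `p_N → p`, so the plug-in averages differ from the averages of `f (p, X_k)` by `o(1)`;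
the latter converge almost surely by the strong law of large numbers.
-/

open MeasureTheory Filter ProbabilityTheory Finset Topology

theorem UniformContinuous.tendstoUniformly_comp_prodMk {α β γ ι κ : Type*} [UniformSpace α]
    [UniformSpace β] [UniformSpace γ] {f : α × β → γ} (hf : UniformContinuous f)
    {l : Filter ι} {q : ι → α} {p : α} (hq : Tendsto q l (𝓝 p)) (x : κ → β) :
    TendstoUniformly (fun i k => f (q i, x k)) (fun k => f (p, x k)) l :=
  have hf₂ : UniformContinuous₂ (Function.curry f) := by
    rwa [uniformContinuous₂_def, Function.uncurry_curry]
  fun u hu => hq.eventually ((hf₂.tendstoUniformly.comp x) u hu)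

theorem tendsto_average_of_tendstoUniformly {F : ℕ → ℕ → ℝ} {G : ℕ → ℝ} {L : ℝ}
    (hFG : TendstoUniformly F G atTop)
    (hG : Tendsto (fun N : ℕ => (∑ k ∈ range N, G k) / N) atTop (𝓝 L)) :
    Tendsto (fun N : ℕ => (∑ k ∈ range N, F N k) / N) atTop (𝓝 L) := by
  suffices h : Tendsto (fun N : ℕ => (∑ k ∈ range N, F N k) / N - (∑ k ∈ range N, G k) / N)
      atTop (𝓝 0) by simpa using h.add hG
  rw [Metric.tendsto_atTop]
  intro ε hε
  obtain ⟨N₀, hN₀⟩ := eventually_atTop.1 (Metric.tendstoUniformly_iff.1 hFG (ε / 2) (half_pos hε))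
  refine ⟨N₀, fun N hN => ?_⟩
  have hbound : ∀ k ∈ range N, ‖F N k - G k‖ ≤ ε / 2 := fun k _ => by
    rw [← dist_eq_norm, dist_comm]; exact (hN₀ N hN k).le
  rcases N.eq_zero_or_pos with rfl | hNpos
  · simpa using hε
  calc dist ((∑ k ∈ range N, F N k) / N - (∑ k ∈ range N, G k) / N) 0
      = ‖∑ k ∈ range N, (F N k - G k)‖ / N := by
        rw [dist_zero_right, div_sub_div_same, ← sum_sub_distrib, norm_div, Real.norm_natCast]
    _ ≤ N * (ε / 2) / N := by
        gcongr
        simpa using norm_sum_le_of_le (range N) hbound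
    _ < ε := by
        rw [mul_div_cancel_left₀ _ (by positivity)]
        exact half_lt_self hε

theorem strong_law_ae_comp {Ω E : Type*} [MeasurableSpace Ω] [MeasurableSpace E]
    {P : Measure Ω} {X : ℕ → Ω → E} (hindep : iIndepFun X P)
    (hident : ∀ k, IdentDistrib (X k) (X 0) P P) {g : E → ℝ} (hg : Measurable g)
    (hint : Integrable (g ∘ X 0) P) :
    ∀ᵐ ω ∂P, Tendsto (fun N : ℕ => (∑ k ∈ range N, g (X k ω)) / N) atTop
      (𝓝 (∫ ω, g (X 0 ω) ∂P)) :=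
  strong_law_ae_real (fun k => g ∘ X k) hint
    (fun _ _ hij => (hindep.indepFun hij).comp hg hg) (fun k => (hident k).comp hg)

theorem Continuous.integrable_comp_of_compactSpace {Ω E : Type*} [MeasurableSpace Ω]
    [TopologicalSpace E] [CompactSpace E] [MeasurableSpace E] [OpensMeasurableSpace E]
    {P : Measure Ω} [IsFiniteMeasure P] {g : E → ℝ} (hg : Continuous g) {Y : Ω → E}
    (hY : AEMeasurable Y P) : Integrable (g ∘ Y) P := by
  obtain ⟨C, hC⟩ := (isCompact_range hg).isBounded.exists_norm_le
  exact Integrable.of_bound (hg.measurable.comp_aemeasurable hY).aestronglyMeasurable C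
    (.of_forall fun ω => hC _ ⟨Y ω, rfl⟩)

theorem plugin_slln_general
    {M : Type*} [MetricSpace M] [CompactSpace M]
    [MeasurableSpace M] [BorelSpace M]
    (f : M × M → ℝ) (hf : Continuous f)
    {Ω : Type*} [MeasurableSpace Ω] (P : Measure Ω) [IsProbabilityMeasure P]
    (X : ℕ → Ω → M)
    (hindep : iIndepFun X P)
    (hident : ∀ k, IdentDistrib (X k) (X 0) P P)
    (pN : ℕ → Ω → M) (p : M)
    (hconv : ∀ᵐ ω ∂P, Tendsto (fun N => pN N ω) atTop (nhds p)) :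
    ∀ᵐ ω ∂P, Tendsto (fun N : ℕ => (∑ k ∈ Finset.range N, f (pN N ω, X k ω)) / N)
      atTop (nhds (∫ ω', f (p, X 0 ω') ∂P)) := by
  have hfp : Continuous fun x => f (p, x) := hf.comp (.prodMk_right p)
  have hslln := strong_law_ae_comp hindep hident hfp.measurable
    (hfp.integrable_comp_of_compactSpace (hident 0).aemeasurable_fst)
  filter_upwards [hslln, hconv] with ω hslln_ω hconv_ω
  exact tendsto_average_of_tendstoUniformly
    (CompactSpace.uniformContinuous_of_continuous hf |>.tendstoUniformly_comp_prodMk hconv_ω _)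
    hslln_ω

/-- Plug-in strong law of large numbers with a random base point: for `f` continuous on the
compact product `M × M`, an i.i.d. sequence `(X_k)` of `M`-valued random variables and base
points `p_N → p` a.s., the averages `(1/N) Σ_{k=1}^N f(p_N, X_k)` converge a.s. to
`E[f(p, X_1)]`. -/
theorem plugin_slln
    {M : Type*} [MetricSpace M] [CompactSpace M]
    [MeasurableSpace M] [BorelSpace M]
    (f : M × M → ℝ) (hf : Continuous f)
    {Ω : Type*} [MeasurableSpace Ω] (P : Measure Ω) [IsProbabilityMeasure P]
    (X : ℕ → Ω → M) (hX : ∀ k, Measurable (X k))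
    (hindep : iIndepFun X P)
    (hident : ∀ k, IdentDistrib (X k) (X 0) P P)
    (pN : ℕ → Ω → M) (hpN : ∀ N, Measurable (pN N)) (p : M)
    (hconv : ∀ᵐ ω ∂P, Tendsto (fun N => pN N ω) atTop (nhds p)) :
    ∀ᵐ ω ∂P, Tendsto (fun N : ℕ => (∑ k ∈ Finset.range N, f (pN N ω, X k ω)) / N)
      atTop (nhds (∫ ω', f (p, X 0 ω') ∂P)) :=
  plugin_slln_general f hf P X hindep hident pN p hconv
end

section
/- Let M be a compact metric space, f, g : M × M → ℝ continuous functions, and (Ω, P) a probability space. Let ((X_k, Y_k))_{k≥1} be an i.i.d. sequence of (M × M)-valued random variables, and let (p_N) be a sequence of measurable maps Ω → M converging almost surely to a point p ∈ M. Then (1/N) Σ_{k=1}^N f(p_N, X_k) · g(p_N, Y_k) → E[f(p, X_1) · g(p, Y_1)] almost surely as N → ∞. -/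
/-!
Write the summand as `H q z` with `z = (x, y)`. At the fixed limit point `p` the averages of
`H p Z_k` converge by the strong law. Since `z` ranges over a compact space, `H q → H p`
uniformly as `q → p`, so the averages `q ↦ (1/N) Σ H q Z_k` are equicontinuous at `p`
(uniformly in `N`); evaluating them at `p_N → p` instead of `p` does not change the limit.
-/

open MeasureTheory Filter ProbabilityTheory Finset Topology

theorem EquicontinuousAt.tendsto_apply_of_tendsto {ι X α : Type*} [TopologicalSpace X]
    [UniformSpace α] {l : Filter ι} {F : ι → X → α} {x : X} {L : α}
    (hF : EquicontinuousAt F x) (hFx : Tendsto (F · x) l (𝓝 L)) {u : ι → X}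
    (hu : Tendsto u l (𝓝 x)) : Tendsto (fun i => F i (u i)) l (𝓝 L) :=
  hFx.congr_uniformity fun _ hU => (hu.eventually (hF _ hU)).mono fun i hi => hi i

theorem Continuous.equicontinuousAt_flip {X E α : Type*} [TopologicalSpace X]
    [TopologicalSpace E] [CompactSpace E] [UniformSpace α]
    {H : X → E → α} (hH : Continuous ↿H) (x : X) : EquicontinuousAt (flip H) x := by
  intro U hU
  obtain ⟨v, hv, hvU⟩ := isCompact_univ.mem_uniformity_of_prod hH.continuousOn (Set.mem_univ x)
    (symm_le_uniformity hU)
  rw [nhdsWithin_univ] at hv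
  filter_upwards [hv] with y hy z using hvU y hy z (Set.mem_univ z)

theorem dist_sum_div_le {ι : Type*} (s : Finset ι) {a b : ι → ℝ} {ε : ℝ} (hε : 0 ≤ ε)
    (hab : ∀ i ∈ s, dist (a i) (b i) ≤ ε) :
    dist ((∑ i ∈ s, a i) / #s) ((∑ i ∈ s, b i) / #s) ≤ ε := by
  rw [Real.dist_eq, ← sub_div, abs_div, Nat.abs_cast]
  calc |∑ i ∈ s, a i - ∑ i ∈ s, b i| / #s ≤ (#s * ε) / #s := by
        gcongr
        simpa [Real.dist_eq] using dist_sum_sum_le_of_le s hab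
    _ ≤ ε := by
        rcases (#s).eq_zero_or_pos with h | h
        · simp [h, hε]
        · rw [mul_div_cancel_left₀ _ (by positivity)]

theorem EquicontinuousAt.sum_range_div {X E : Type*} [TopologicalSpace X] {h : E → X → ℝ}
    {x : X} (hh : EquicontinuousAt h x) (z : ℕ → E) :
    EquicontinuousAt (fun n y => (∑ k ∈ range n, h (z k) y) / n) x := by
  rw [Metric.equicontinuousAt_iff_right] at hh ⊢
  intro ε hε
  filter_upwards [hh (ε / 2) (half_pos hε)] with y hy n
  have := dist_sum_div_le (range n) (half_pos hε).le fun k _ => (hy (z k)).le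
  rw [card_range] at this
  linarith

theorem strong_law_ae_of_continuous {Ω E : Type*} [MeasurableSpace Ω] {P : Measure Ω}
    [IsProbabilityMeasure P] [TopologicalSpace E] [CompactSpace E] [MeasurableSpace E]
    [OpensMeasurableSpace E] {φ : E → ℝ} (hφ : Continuous φ) {Z : ℕ → Ω → E}
    (hZ : Measurable (Z 0)) (hindep : Pairwise fun i j => Z i ⟂ᵢ[P] Z j)
    (hident : ∀ k, IdentDistrib (Z k) (Z 0) P P) :
    ∀ᵐ ω ∂P, Tendsto (fun n : ℕ => (∑ k ∈ range n, φ (Z k ω)) / n) atTop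
      (𝓝 (∫ ω, φ (Z 0 ω) ∂P)) :=
  strong_law_ae_real (fun k ω => φ (Z k ω))
    (((BoundedContinuousFunction.mkOfCompact ⟨φ, hφ⟩).integrable _).comp_measurable hZ)
    (fun _ _ hij => (hindep hij).comp hφ.measurable hφ.measurable)
    (fun k => (hident k).comp hφ.measurable)

theorem plugin_slln_product_general
    {M : Type*} [MetricSpace M] [CompactSpace M]
    [MeasurableSpace M] [BorelSpace M]
    (f g : M × M → ℝ) (hf : Continuous f) (hg : Continuous g)
    {Ω : Type*} [MeasurableSpace Ω] (P : Measure Ω) [IsProbabilityMeasure P]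
    (X Y : ℕ → Ω → M) (hXY : ∀ k, Measurable (fun ω => (X k ω, Y k ω)))
    (hindep : iIndepFun (fun k ω => (X k ω, Y k ω)) P)
    (hident : ∀ k, IdentDistrib (fun ω => (X k ω, Y k ω)) (fun ω => (X 0 ω, Y 0 ω)) P P)
    (pN : ℕ → Ω → M) (p : M)
    (hconv : ∀ᵐ ω ∂P, Tendsto (fun N => pN N ω) atTop (nhds p)) :
    ∀ᵐ ω ∂P, Tendsto
      (fun N : ℕ => (∑ k ∈ Finset.range N, f (pN N ω, X k ω) * g (pN N ω, Y k ω)) / N)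
      atTop (nhds (∫ ω', f (p, X 0 ω') * g (p, Y 0 ω') ∂P)) := by
  let H : M → M × M → ℝ := fun q z => f (q, z.1) * g (q, z.2)
  have hH : Continuous ↿H := by fun_prop
  have hlaw := strong_law_ae_of_continuous (hH.comp (Continuous.prodMk_right p)) (hXY 0)
    (fun _ _ hij => hindep.indepFun hij) hident
  filter_upwards [hlaw, hconv] with ω hω hpω
  have hequi := (hH.equicontinuousAt_flip p).sum_range_div fun k => (X k ω, Y k ω)
  exact hequi.tendsto_apply_of_tendsto hω hpω

/-- Product form of the plug-in strong law of large numbers: for `f, g` continuous on the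
compact product `M × M`, an i.i.d. sequence of pairs `(X_k, Y_k)` in `M × M` and random base
points `p_N → p` a.s., the averages `(1/N) Σ_{k=1}^N f(p_N, X_k)·g(p_N, Y_k)` converge a.s.
to `E[f(p, X_1)·g(p, Y_1)]`. -/
theorem plugin_slln_product
    {M : Type*} [MetricSpace M] [CompactSpace M]
    [MeasurableSpace M] [BorelSpace M]
    (f g : M × M → ℝ) (hf : Continuous f) (hg : Continuous g)
    {Ω : Type*} [MeasurableSpace Ω] (P : Measure Ω) [IsProbabilityMeasure P]
    (X Y : ℕ → Ω → M) (hXY : ∀ k, Measurable (fun ω => (X k ω, Y k ω)))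
    (hindep : iIndepFun (fun k ω => (X k ω, Y k ω)) P)
    (hident : ∀ k, IdentDistrib (fun ω => (X k ω, Y k ω)) (fun ω => (X 0 ω, Y 0 ω)) P P)
    (pN : ℕ → Ω → M) (hpN : ∀ N, Measurable (pN N)) (p : M)
    (hconv : ∀ᵐ ω ∂P, Tendsto (fun N => pN N ω) atTop (nhds p)) :
    ∀ᵐ ω ∂P, Tendsto
      (fun N : ℕ => (∑ k ∈ Finset.range N, f (pN N ω, X k ω) * g (pN N ω, Y k ω)) / N)
      atTop (nhds (∫ ω', f (p, X 0 ω') * g (p, Y 0 ω') ∂P)) :=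
  plugin_slln_product_general f g hf hg P X Y hXY hindep hident pN p hconv
end

section
/- Let M be a compact metric space, n a natural number, L : M × M → ℝⁿ a continuous map, and (Ω, P) a probability space. Let ((X_k, Y_k))_{k≥1} be an i.i.d. sequence of (M × M)-valued random variables, and let (p_N) be a sequence of measurable maps Ω → M converging almost surely to a point p ∈ M. Define the sample Riemannian covariance Rcov̂_N = (1/N) Σ_{k=1}^N ⟨L(p_N, X_k), L(p_N, Y_k)⟩ − ⟨(1/N) Σ_{k=1}^N L(p_N, X_k), (1/N) Σ_{k=1}^N L(p_N, Y_k)⟩, where ⟨·,·⟩ is the Euclidean inner product on ℝⁿ. Then Rcov̂_N → E[⟨L(p, X_1), L(p, Y_1)⟩] − ⟨E[L(p, X_1)], E[L(p, Y_1)]⟩ almost surely as N → ∞. -/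
open MeasureTheory Filter ProbabilityTheory Finset Topology
open scoped RealInnerProductSpace

/-!
Curry the integrand: `a ↦ g(·, a)` is a continuous map from the compact space of observations
into the Banach space `C(M, E)`, so the strong law of large numbers in `C(M, E)` makes the
averages `N⁻¹ ∑ g(·, Z_k)` converge uniformly on `M` to `E[g(·, Z_0)]`. Uniform convergence
survives evaluation at moving points `q_N → p`. The sample covariance is a continuous expression
in three such averages.
-/

section StrongLaw

variable {Ω : Type*} [MeasurableSpace Ω] {P : Measure Ω} [IsFiniteMeasure P]
  {A : Type*} [TopologicalSpace A] [CompactSpace A] [MeasurableSpace A] [OpensMeasurableSpace A]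
  {Z : ℕ → Ω → A}

theorem Continuous.integrable_comp_of_compactSpace_s12 {F : Type*} [NormedAddCommGroup F]
    {G : A → F} (hG : Continuous G) {f : Ω → A} (hf : Measurable f) :
    Integrable (fun ω => G (f ω)) P := by
  obtain ⟨C, hC⟩ := (isCompact_range hG).isBounded.exists_norm_le
  exact .of_bound ((hG.stronglyMeasurable_of_hasCompactSupport
    (.of_compactSpace G)).comp_measurable hf).aestronglyMeasurable C
    (.of_forall fun ω => hC _ ⟨_, rfl⟩)

theorem strong_law_ae_comp_continuous {F : Type*} [NormedAddCommGroup F] [NormedSpace ℝ F]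
    [CompleteSpace F] [MeasurableSpace F] [BorelSpace F]
    {G : A → F} (hG : Continuous G) (hZ : ∀ k, Measurable (Z k))
    (hindep : Pairwise fun i j => IndepFun (Z i) (Z j) P)
    (hident : ∀ k, IdentDistrib (Z k) (Z 0) P P) :
    ∀ᵐ ω ∂P, Tendsto (fun N : ℕ => (N : ℝ)⁻¹ • ∑ k ∈ range N, G (Z k ω))
      atTop (𝓝 (∫ ω, G (Z 0 ω) ∂P)) :=
  strong_law_ae (fun k ω => G (Z k ω)) (hG.integrable_comp_of_compactSpace_s12 (hZ 0))
    (fun _ _ hij => (hindep hij).comp hG.measurable hG.measurable)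
    (fun k => (hident k).comp hG.measurable)

theorem strong_law_ae_comp_continuous_of_tendsto {M : Type*} [TopologicalSpace M]
    [CompactSpace M] {E : Type*} [NormedAddCommGroup E] [NormedSpace ℝ E] [CompleteSpace E]
    {g : M × A → E} (hg : Continuous g) (hZ : ∀ k, Measurable (Z k))
    (hindep : Pairwise fun i j => IndepFun (Z i) (Z j) P)
    (hident : ∀ k, IdentDistrib (Z k) (Z 0) P P)
    {q : ℕ → Ω → M} {p : M} (hq : ∀ᵐ ω ∂P, Tendsto (fun N => q N ω) atTop (𝓝 p)) :
    ∀ᵐ ω ∂P, Tendsto (fun N : ℕ => (N : ℝ)⁻¹ • ∑ k ∈ range N, g (q N ω, Z k ω))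
      atTop (𝓝 (∫ ω, g (p, Z 0 ω) ∂P)) := by
  borelize C(M, E)
  let G : C(A, C(M, E)) := ContinuousMap.curry ⟨fun x : A × M => g (x.2, x.1), by fun_prop⟩
  filter_upwards [strong_law_ae_comp_continuous G.continuous hZ hindep hident, hq]
    with ω hGω hqω
  have := hGω.eval hqω
  rw [ContinuousMap.integral_apply (G.continuous.integrable_comp_of_compactSpace_s12 (hZ 0))]
    at this
  simpa [G] using this

end StrongLaw

theorem sample_riemannian_covariance_strong_consistency_general
    {M : Type*} [MetricSpace M] [CompactSpace M]
    [MeasurableSpace M] [BorelSpace M]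
    (n : ℕ) (L : M × M → EuclideanSpace ℝ (Fin n)) (hL : Continuous L)
    {Ω : Type*} [MeasurableSpace Ω] (P : Measure Ω) [IsProbabilityMeasure P]
    (X Y : ℕ → Ω → M) (hXY : ∀ k, Measurable (fun ω => (X k ω, Y k ω)))
    (hindep : iIndepFun (fun k ω => (X k ω, Y k ω)) P)
    (hident : ∀ k, IdentDistrib (fun ω => (X k ω, Y k ω)) (fun ω => (X 0 ω, Y 0 ω)) P P)
    (pN : ℕ → Ω → M) (p : M)
    (hconv : ∀ᵐ ω ∂P, Tendsto (fun N => pN N ω) atTop (nhds p)) :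
    ∀ᵐ ω ∂P, Tendsto
      (fun N : ℕ =>
        (∑ k ∈ Finset.range N, ⟪L (pN N ω, X k ω), L (pN N ω, Y k ω)⟫) / N -
          ⟪(N : ℝ)⁻¹ • ∑ k ∈ Finset.range N, L (pN N ω, X k ω),
            (N : ℝ)⁻¹ • ∑ k ∈ Finset.range N, L (pN N ω, Y k ω)⟫)
      atTop
      (nhds ((∫ ω', ⟪L (p, X 0 ω'), L (p, Y 0 ω')⟫ ∂P) -
        ⟪∫ ω', L (p, X 0 ω') ∂P, ∫ ω', L (p, Y 0 ω') ∂P⟫)) := by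
  have hpair : Pairwise fun i j =>
      IndepFun (fun ω => (X i ω, Y i ω)) (fun ω => (X j ω, Y j ω)) P :=
    fun _ _ hij => hindep.indepFun hij
  filter_upwards [
    strong_law_ae_comp_continuous_of_tendsto (g := fun x => ⟪L (x.1, x.2.1), L (x.1, x.2.2)⟫)
      (by fun_prop) hXY hpair hident hconv,
    strong_law_ae_comp_continuous_of_tendsto (g := fun x => L (x.1, x.2.1))
      (by fun_prop) hXY hpair hident hconv,
    strong_law_ae_comp_continuous_of_tendsto (g := fun x => L (x.1, x.2.2))
      (by fun_prop) hXY hpair hident hconv]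
    with ω hXYω hXω hYω
  convert hXYω.sub (hXω.inner hYω) using 2 with N
  simp [div_eq_inv_mul]

/-- Strong consistency of the sample Riemannian covariance (trace form of Theorem 4.3):
for a continuous map `L : M × M → ℝⁿ` on a compact metric space, i.i.d. pairs `(X_k, Y_k)`
and random base points `p_N → p` a.s., the sample covariance
`(1/N) Σ ⟨L(p_N,X_k), L(p_N,Y_k)⟩ − ⟨(1/N) Σ L(p_N,X_k), (1/N) Σ L(p_N,Y_k)⟩`
converges a.s. to `E[⟨L(p,X_1), L(p,Y_1)⟩] − ⟨E[L(p,X_1)], E[L(p,Y_1)]⟩`. -/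
theorem sample_riemannian_covariance_strong_consistency
    {M : Type*} [MetricSpace M] [CompactSpace M]
    [MeasurableSpace M] [BorelSpace M]
    (n : ℕ) (L : M × M → EuclideanSpace ℝ (Fin n)) (hL : Continuous L)
    {Ω : Type*} [MeasurableSpace Ω] (P : Measure Ω) [IsProbabilityMeasure P]
    (X Y : ℕ → Ω → M) (hXY : ∀ k, Measurable (fun ω => (X k ω, Y k ω)))
    (hindep : iIndepFun (fun k ω => (X k ω, Y k ω)) P)
    (hident : ∀ k, IdentDistrib (fun ω => (X k ω, Y k ω)) (fun ω => (X 0 ω, Y 0 ω)) P P)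
    (pN : ℕ → Ω → M) (hpN : ∀ N, Measurable (pN N)) (p : M)
    (hconv : ∀ᵐ ω ∂P, Tendsto (fun N => pN N ω) atTop (nhds p)) :
    ∀ᵐ ω ∂P, Tendsto
      (fun N : ℕ =>
        (∑ k ∈ Finset.range N, ⟪L (pN N ω, X k ω), L (pN N ω, Y k ω)⟫) / N -
          ⟪(N : ℝ)⁻¹ • ∑ k ∈ Finset.range N, L (pN N ω, X k ω),
            (N : ℝ)⁻¹ • ∑ k ∈ Finset.range N, L (pN N ω, Y k ω)⟫)
      atTop
      (nhds ((∫ ω', ⟪L (p, X 0 ω'), L (p, Y 0 ω')⟫ ∂P) -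
        ⟪∫ ω', L (p, X 0 ω') ∂P, ∫ ω', L (p, Y 0 ω') ∂P⟫)) :=
  sample_riemannian_covariance_strong_consistency_general n L hL P X Y hXY hindep hident pN p hconv
end

section
/- Let M be a compact metric space, n a natural number, L : M × M → ℝⁿ a continuous map, and (Ω, P) a probability space. Let ((X_k, Y_k))_{k≥1} be an i.i.d. sequence of (M × M)-valued random variables, and let (p_N) be a sequence of measurable maps Ω → M converging almost surely to a point p ∈ M. For two M-valued random variables W, Z set Rcov(W,Z) = E[⟨L(p,W), L(p,Z)⟩] − ⟨E[L(p,W)], E[L(p,Z)]⟩, and assume Rcov(X_1,X_1) > 0 and Rcov(Y_1,Y_1) > 0. Let Rcov̂_N(W,Z) denote the corresponding sample quantity (1/N) Σ_{k=1}^N ⟨L(p_N, W_k), L(p_N, Z_k)⟩ − ⟨(1/N) Σ L(p_N, W_k), (1/N) Σ L(p_N, Z_k)⟩. Then the sample Riemannian correlation Rcorr̂_N = Rcov̂_N(X,Y) / (√(Rcov̂_N(X,X)) · √(Rcov̂_N(Y,Y))) converges almost surely, as N → ∞, to Rcorr = Rcov(X_1,Y_1) / (√(Rcov(X_1,X_1))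 · √(Rcov(Y_1,Y_1))). -/
open MeasureTheory Filter ProbabilityTheory
open scoped RealInnerProductSpace

/-- The sample Riemannian covariance of the first `N` pairs `(W_k, Z_k)`, with tangent map
`L` evaluated at the base point `q`:
`(1/N) Σ ⟨L(q,W_k), L(q,Z_k)⟩ − ⟨(1/N) Σ L(q,W_k), (1/N) Σ L(q,Z_k)⟩`. -/
noncomputable def sampleRcov {M Ω : Type*} {n : ℕ}
    (L : M × M → EuclideanSpace ℝ (Fin n)) (q : M)
    (W Z : ℕ → Ω → M) (N : ℕ) (ω : Ω) : ℝ :=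
  (∑ k ∈ Finset.range N, ⟪L (q, W k ω), L (q, Z k ω)⟫) / N -
    ⟪(N : ℝ)⁻¹ • ∑ k ∈ Finset.range N, L (q, W k ω),
      (N : ℝ)⁻¹ • ∑ k ∈ Finset.range N, L (q, Z k ω)⟫

/-- The population Riemannian covariance at base point `p`:
`Rcov(W,Z) = E[⟨L(p,W), L(p,Z)⟩] − ⟨E[L(p,W)], E[L(p,Z)]⟩`. -/
noncomputable def popRcov {M Ω : Type*} [MeasurableSpace Ω] {n : ℕ}
    (L : M × M → EuclideanSpace ℝ (Fin n)) (p : M)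
    (W Z : Ω → M) (P : Measure Ω) : ℝ :=
  (∫ ω, ⟪L (p, W ω), L (p, Z ω)⟫ ∂P) - ⟪∫ ω, L (p, W ω) ∂P, ∫ ω, L (p, Z ω) ∂P⟫

/-!
The sample covariance at a base point `q` is a continuous expression in three empirical averages
of continuous functions of `(q, X_k, Y_k)`. At the fixed point `p` these averages converge almost
surely by the strong law of large numbers. Moving the base point from `p` to `p_N` changes every
summand by an amount that is small uniformly in `k`, because `L` is uniformly continuous on the
compact space `M × M`; hence the averages at `p_N` have the same limits. The correlation is a
continuous function of the three covariances at limits with nonzero denominator.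
-/

section Average

variable {E : Type*} [NormedAddCommGroup E] [NormedSpace ℝ E]

lemma tendsto_average_sub_of_tendstoUniformly {F : ℕ → ℕ → E} {f : ℕ → E}
    (h : TendstoUniformly F f atTop) :
    Tendsto (fun N : ℕ => (N : ℝ)⁻¹ • ∑ k ∈ Finset.range N, (F N k - f k)) atTop (nhds 0) := by
  rw [NormedAddGroup.tendsto_nhds_zero]
  intro ε hε
  filter_upwards [Metric.tendstoUniformly_iff.1 h (ε / 2) (half_pos hε)] with N hN
  have hsum : ‖∑ k ∈ Finset.range N, (F N k - f k)‖ ≤ N * (ε / 2) := by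
    refine (norm_sum_le_of_le _ fun k _ => (dist_eq_norm' (f k) (F N k) ▸ hN k).le).trans_eq ?_
    rw [Finset.sum_const, Finset.card_range, nsmul_eq_mul]
  calc ‖(N : ℝ)⁻¹ • ∑ k ∈ Finset.range N, (F N k - f k)‖
      ≤ (N : ℝ)⁻¹ * (N * (ε / 2)) := by
        rw [norm_smul, norm_inv, Real.norm_natCast]
        gcongr
    _ ≤ ε / 2 := by
        rcases N.eq_zero_or_pos with rfl | hN
        · simpa using (half_pos hε).le
        · rw [inv_mul_cancel_left₀ (by positivity)]
    _ < ε := half_lt_self hε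

lemma tendsto_average_of_tendstoUniformly_s13 {F : ℕ → ℕ → E} {f : ℕ → E} {l : E}
    (hF : TendstoUniformly F f atTop)
    (hf : Tendsto (fun N : ℕ => (N : ℝ)⁻¹ • ∑ k ∈ Finset.range N, f k) atTop (nhds l)) :
    Tendsto (fun N : ℕ => (N : ℝ)⁻¹ • ∑ k ∈ Finset.range N, F N k) atTop (nhds l) := by
  simpa [Finset.sum_sub_distrib, smul_sub] using
    (tendsto_average_sub_of_tendstoUniformly hF).add hf

end Average

lemma tendstoUniformly_comp_of_tendsto {M A E : Type*} [MetricSpace M] [CompactSpace M]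
    [MetricSpace A] [CompactSpace A] [NormedAddCommGroup E]
    {F : M × A → E} (hF : Continuous F) {q : ℕ → M} {p : M}
    (hq : Tendsto q atTop (nhds p)) (U : ℕ → A) :
    TendstoUniformly (fun N k => F (q N, U k)) (fun k => F (p, U k)) atTop := by
  have hF₂ : UniformContinuous₂ (fun x a => F (x, a)) :=
    CompactSpace.uniformContinuous_of_continuous hF
  exact fun u hu => hq.eventually (hF₂.tendstoUniformly.comp U u hu)

lemma strong_law_ae_comp_of_compactSpace {B Ω E : Type*} [TopologicalSpace B] [CompactSpace B]
    [MeasurableSpace B] [OpensMeasurableSpace B]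
    [MeasurableSpace Ω] {P : Measure Ω} [IsProbabilityMeasure P]
    [NormedAddCommGroup E] [NormedSpace ℝ E] [CompleteSpace E]
    [MeasurableSpace E] [BorelSpace E] [SecondCountableTopology E]
    {U : ℕ → Ω → B} (hU : Measurable (U 0)) (hindep : iIndepFun U P)
    (hident : ∀ k, IdentDistrib (U k) (U 0) P P) {f : B → E} (hf : Continuous f) :
    ∀ᵐ ω ∂P, Tendsto (fun N : ℕ => (N : ℝ)⁻¹ • ∑ k ∈ Finset.range N, f (U k ω))
      atTop (nhds (∫ ω, f (U 0 ω) ∂P)) := by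
  have hint : Integrable (fun ω => f (U 0 ω)) P := by
    obtain ⟨C, hC⟩ := isCompact_univ.exists_bound_of_continuousOn hf.continuousOn
    exact (integrable_const C).mono' (hf.measurable.comp hU).aestronglyMeasurable
      (.of_forall fun ω => by simpa using hC (U 0 ω) trivial)
  exact strong_law_ae _ hint
    (fun i j hij => (hindep.indepFun hij).comp hf.measurable hf.measurable)
    (fun i => (hident i).comp hf.measurable)

lemma ae_tendsto_sampleRcov {M : Type*} [MetricSpace M] [CompactSpace M]
    [MeasurableSpace M] [BorelSpace M] {n : ℕ}
    {L : M × M → EuclideanSpace ℝ (Fin n)} (hL : Continuous L)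
    {Ω : Type*} [MeasurableSpace Ω] {P : Measure Ω} [IsProbabilityMeasure P]
    {W Z : ℕ → Ω → M} (hWZ : Measurable (fun ω => (W 0 ω, Z 0 ω)))
    (hindep : iIndepFun (fun k ω => (W k ω, Z k ω)) P)
    (hident : ∀ k, IdentDistrib (fun ω => (W k ω, Z k ω)) (fun ω => (W 0 ω, Z 0 ω)) P P)
    {pN : ℕ → Ω → M} {p : M} (hconv : ∀ᵐ ω ∂P, Tendsto (fun N => pN N ω) atTop (nhds p)) :
    ∀ᵐ ω ∂P, Tendsto (fun N => sampleRcov L (pN N ω) W Z N ω) atTop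
      (nhds (popRcov L p (W 0) (Z 0) P)) := by
  have hLW : Continuous fun x : M × (M × M) => L (x.1, x.2.1) := by fun_prop
  have hLZ : Continuous fun x : M × (M × M) => L (x.1, x.2.2) := by fun_prop
  have hLWZ : Continuous fun x : M × (M × M) => ⟪L (x.1, x.2.1), L (x.1, x.2.2)⟫ :=
    hLW.inner hLZ
  have slln {E : Type} [NormedAddCommGroup E] [NormedSpace ℝ E] [CompleteSpace E]
      [MeasurableSpace E] [BorelSpace E] [SecondCountableTopology E]
      {F : M × (M × M) → E} (hF : Continuous F) :=
    strong_law_ae_comp_of_compactSpace hWZ hindep hident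
      (f := fun z => F (p, z)) (by fun_prop)
  filter_upwards [hconv, slln hLWZ, slln hLW, slln hLZ] with ω hp hInner hW hZ
  have key {E : Type} [NormedAddCommGroup E] [NormedSpace ℝ E] {F : M × (M × M) → E}
      (hF : Continuous F) {l : E}
      (h : Tendsto (fun N : ℕ => (N : ℝ)⁻¹ • ∑ k ∈ Finset.range N, F (p, W k ω, Z k ω))
        atTop (nhds l)) :
      Tendsto (fun N : ℕ => (N : ℝ)⁻¹ • ∑ k ∈ Finset.range N, F (pN N ω, W k ω, Z k ω))
        atTop (nhds l) :=
    tendsto_average_of_tendstoUniformly_s13 (tendstoUniformly_comp_of_tendsto hF hp _) h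
  refine ((key hLWZ hInner).sub ((key hLW hW).inner (key hLZ hZ))).congr fun N => ?_
  simp only [sampleRcov, div_eq_inv_mul, smul_eq_mul]

theorem sample_riemannian_correlation_strong_consistency_general
    {M : Type*} [MetricSpace M] [CompactSpace M]
    [MeasurableSpace M] [BorelSpace M]
    (n : ℕ) (L : M × M → EuclideanSpace ℝ (Fin n)) (hL : Continuous L)
    {Ω : Type*} [MeasurableSpace Ω] (P : Measure Ω) [IsProbabilityMeasure P]
    (X Y : ℕ → Ω → M) (hXY : ∀ k, Measurable (fun ω => (X k ω, Y k ω)))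
    (hindep : iIndepFun (fun k ω => (X k ω, Y k ω)) P)
    (hident : ∀ k, IdentDistrib (fun ω => (X k ω, Y k ω)) (fun ω => (X 0 ω, Y 0 ω)) P P)
    (pN : ℕ → Ω → M) (p : M)
    (hconv : ∀ᵐ ω ∂P, Tendsto (fun N => pN N ω) atTop (nhds p))
    (hXX : 0 < popRcov L p (X 0) (X 0) P)
    (hYY : 0 < popRcov L p (Y 0) (Y 0) P) :
    ∀ᵐ ω ∂P, Tendsto
      (fun N : ℕ =>
        sampleRcov L (pN N ω) X Y N ω /
          (Real.sqrt (sampleRcov L (pN N ω) X X N ω) *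
            Real.sqrt (sampleRcov L (pN N ω) Y Y N ω)))
      atTop
      (nhds (popRcov L p (X 0) (Y 0) P /
        (Real.sqrt (popRcov L p (X 0) (X 0) P) *
          Real.sqrt (popRcov L p (Y 0) (Y 0) P)))) := by
  have hdiag {g : M × M → M} (hg : Measurable g) :=
    ae_tendsto_sampleRcov hL (W := fun k ω => g (X k ω, Y k ω))
      (Z := fun k ω => g (X k ω, Y k ω)) ((hg.comp (hXY 0)).prodMk (hg.comp (hXY 0)))
      (hindep.comp (fun _ z => (g z, g z)) fun _ => hg.prodMk hg)
      (fun k => (hident k).comp (hg.prodMk hg)) hconv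
  filter_upwards [ae_tendsto_sampleRcov hL (hXY 0) hindep hident hconv,
    hdiag measurable_fst, hdiag measurable_snd] with ω hXYω hXω hYω
  exact hXYω.div (hXω.sqrt.mul hYω.sqrt) (by positivity)

/-- Strong consistency of the sample Riemannian correlation (Corollary 4.4 in trace form):
for a continuous map `L : M × M → ℝⁿ` on a compact metric space, i.i.d. pairs `(X_k, Y_k)`,
random base points `p_N → p` a.s., and positive population variances, the sample Riemannian
correlation `Rcov̂_N(X,Y)/(√Rcov̂_N(X,X)·√Rcov̂_N(Y,Y))` converges a.s. to
`Rcov(X_1,Y_1)/(√Rcov(X_1,X_1)·√Rcov(Y_1,Y_1))`. -/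
theorem sample_riemannian_correlation_strong_consistency
    {M : Type*} [MetricSpace M] [CompactSpace M]
    [MeasurableSpace M] [BorelSpace M]
    (n : ℕ) (L : M × M → EuclideanSpace ℝ (Fin n)) (hL : Continuous L)
    {Ω : Type*} [MeasurableSpace Ω] (P : Measure Ω) [IsProbabilityMeasure P]
    (X Y : ℕ → Ω → M) (hXY : ∀ k, Measurable (fun ω => (X k ω, Y k ω)))
    (hindep : iIndepFun (fun k ω => (X k ω, Y k ω)) P)
    (hident : ∀ k, IdentDistrib (fun ω => (X k ω, Y k ω)) (fun ω => (X 0 ω, Y 0 ω)) P P)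
    (pN : ℕ → Ω → M) (hpN : ∀ N, Measurable (pN N)) (p : M)
    (hconv : ∀ᵐ ω ∂P, Tendsto (fun N => pN N ω) atTop (nhds p))
    (hXX : 0 < popRcov L p (X 0) (X 0) P)
    (hYY : 0 < popRcov L p (Y 0) (Y 0) P) :
    ∀ᵐ ω ∂P, Tendsto
      (fun N : ℕ =>
        sampleRcov L (pN N ω) X Y N ω /
          (Real.sqrt (sampleRcov L (pN N ω) X X N ω) *
            Real.sqrt (sampleRcov L (pN N ω) Y Y N ω)))
      atTop
      (nhds (popRcov L p (X 0) (Y 0) P /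
        (Real.sqrt (popRcov L p (X 0) (X 0) P) *
          Real.sqrt (popRcov L p (Y 0) (Y 0) P)))) :=
  sample_riemannian_correlation_strong_consistency_general n L hL P X Y hXY hindep hident pN p hconv
    hXX hYY
end
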